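/- Theorem 2 (reuse gap after adding domains, formal version). In the bivariate log-linear setup, let r₀ := (1, 0, …, 0) ∈ Δ^{d₂} (all weight on the virtual domain) and let r* = (ρ*, (1−ρ*)·p₂*) ∈ Δ^{d₂} with ρ* ∈ [0,1]. Let p̃ ∈ Δ^{d₁−1} minimize p₁ ↦ F(r₀, p₁) over a convex set S(r₀) ⊆ Δ^{d₁−1} (the pre-update problem, in which the added domains carry zero weight) and let p₁' ∈ Δ^{d₁−1} minimize p₁ ↦ F(r*, p₁) over a convex set S(r*) ⊆ Δ^{d₁−1} (the post-update optimal normalized mix over the unaffected domains). Assume: (i) for each r ∈ Δ^{d₂}, p₁ ↦ F(r, p₁) is μ₁-strongly convex on Δ^{d₁−1} with μ₁ > 0; (ii) mutual feasibility: p̃ ∈ S(r*) and p₁' ∈ S(r₀); (iii) r* together with p₁' solves the post-update mixing problem, with expanded optimum q* := Φ_{p₁'}(r*). Let c_max := max_{1≤i≤n} (‖A_{i,1}‖₂ + ‖A_{i,2}‖₂). Then ‖p̃ − p₁'‖ ≤ (2·F̄(q*)·exp(c_max·(1−ρ*)) / μ₁) · κ(α_fix, α_comp) · (1−ρ*). 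-/

import Mathlib

noncomputable section
open scoped RealInnerProductSpace BigOperators

/-- Euclidean space `ℝ^m`. -/
abbrev Euc (m : ℕ) := EuclideanSpace ℝ (Fin m)

/-- Build a vector of `ℝ^m` from its coordinates. -/
def vecOf {m : ℕ} (f : Fin m → ℝ) : Euc m := (WithLp.equiv 2 _).symm f

/-- The probability simplex in `ℝ^m`. -/
def probSimplex (m : ℕ) : Set (Euc m) := {p | (∀ i, 0 ≤ p i) ∧ ∑ i, p i = 1}

/-- A point of the collapsed space `ℝ^{1+d₂}` from `(ρ, b₂)`; coordinate `0` is `ρ`. -/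
def pairR {d₂ : ℕ} (ρ : ℝ) (b₂ : Fin d₂ → ℝ) : Euc (d₂ + 1) := vecOf (Fin.cons ρ b₂)

/-- The collapsed simplex `Δ^{d₂} = {(ρ, b₂) : ρ ≥ 0, b₂ ≥ 0, ρ + Σ_j (b₂)_j = 1}`. -/
def collapsedSimplex (d₂ : ℕ) : Set (Euc (d₂ + 1)) := probSimplex (d₂ + 1)

/-- A point of the full space `ℝ^{d₁+d₂}` from its two blocks of coordinates. -/
def pairQ {d₁ d₂ : ℕ} (x : Fin d₁ → ℝ) (y : Fin d₂ → ℝ) : Euc (d₁ + d₂) :=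
  vecOf (Fin.append x y)

/-- The expansion map `Φ_{p₁}(ρ, b₂) = (ρ·p₁, b₂)`. -/
def Phi {d₁ d₂ : ℕ} (p₁ : Euc d₁) (r : Euc (d₂ + 1)) : Euc (d₁ + d₂) :=
  pairQ (fun j => r 0 * p₁ j) (fun j => r j.succ)

variable {n d₁ d₂ : ℕ}

/-- `⟨A_i, q⟩` where `A_i = (A_{i,1}, A_{i,2})`. -/
def innerA (A₁ : Fin n → Euc d₁) (A₂ : Fin n → Euc d₂) (i : Fin n) (q : Euc (d₁ + d₂)) : ℝ :=
  ⟪pairQ (A₁ i) (A₂ i), q⟫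

/-- `F̄(q) = (1/n)·Σ_i exp(⟨A_i, q⟩)`. -/
def Fbar (A₁ : Fin n → Euc d₁) (A₂ : Fin n → Euc d₂) (q : Euc (d₁ + d₂)) : ℝ :=
  (1 / (n : ℝ)) * ∑ i, Real.exp (innerA A₁ A₂ i q)

/-- `F(q) = (1/n)·Σ_i (c_i + exp(⟨A_i, q⟩))`. -/
def Ffull (c : Fin n → ℝ) (A₁ : Fin n → Euc d₁) (A₂ : Fin n → Euc d₂)
    (q : Euc (d₁ + d₂)) : ℝ :=
  (1 / (n : ℝ)) * ∑ i, (c i + Real.exp (innerA A₁ A₂ i q))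

/-- The bivariate objective `F(r, p₁) := F(Φ_{p₁}(r))`. -/
def Fb (c : Fin n → ℝ) (A₁ : Fin n → Euc d₁) (A₂ : Fin n → Euc d₂)
    (r : Euc (d₂ + 1)) (p₁ : Euc d₁) : ℝ :=
  Ffull c A₁ A₂ (Phi p₁ r)


/-- Feasible set of the (post-update) full mixing problem,
`{q ∈ Δ^{d₁+d₂−1} : q_j ≤ k·N_j'/R}`. -/
def feasQ (d₁ d₂ : ℕ) (N' : Fin (d₁ + d₂) → ℝ) (k R : ℝ) : Set (Euc (d₁ + d₂)) :=
  {q | q ∈ probSimplex (d₁ + d₂) ∧ ∀ j, q j ≤ k * N' j / R}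

/-- The coupling term `κ(α_fix, α_comp) = ‖(𝟏 + α_fix + α_comp) ⊙ α_fix‖`. -/
def kappa {n d₁ d₂ : ℕ} (A₁ : Fin n → Euc d₁) (A₂ : Fin n → Euc d₂) : ℝ :=
  ‖vecOf (fun i => (1 + ‖A₁ i‖ + ‖A₂ i‖) * ‖A₁ i‖)‖

/-!
Both `p̃` and `p₁'` satisfy first-order optimality conditions, and strong convexity of
`F(r₀, ·)` turns these into `μ₁ ‖p̃ - p₁'‖ ≤ ‖∇F(r*, p₁') - ∇F(r₀, p₁')‖`. The two
gradients are averages of the same vectors `A_{i,1}`, with weights `ρ* e^{⟨A_i, q*⟩}` and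
`e^{⟨A_i, Φ_{p₁'}(r₀)⟩}`. The exponents differ by at most `(1 - ρ*) (‖A_{i,1}‖ + ‖A_{i,2}‖)`,
so each weight gap is at most
`e^{⟨A_i, q*⟩} (1 - ρ*) (1 + ‖A_{i,1}‖ + ‖A_{i,2}‖) e^{c_max (1 - ρ*)}`,
and averaging gives the bound.
-/

theorem IsMinOn.inner_gradient_sub_nonneg {E : Type*} [NormedAddCommGroup E]
    [InnerProductSpace ℝ E] [CompleteSpace E] {f : E → ℝ} {g x y : E} {S : Set E}
    (hS : Convex ℝ S) (hx : x ∈ S) (hy : y ∈ S) (hmin : IsMinOn f S x)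
    (hf : HasGradientAt f g x) : 0 ≤ ⟪g, y - x⟫ := by
  simpa using hmin.localize.hasFDerivWithinAt_nonneg hf.hasFDerivAt.hasFDerivWithinAt
    (sub_mem_posTangentConeAt_of_segment_subset (hS.segment_subset hx hy))

theorem mul_norm_sub_le_of_isMinOn {E : Type*} [NormedAddCommGroup E]
    [InnerProductSpace ℝ E] [CompleteSpace E] {f₀ f₁ : E → ℝ} {S₀ S₁ : Set E} {x y : E} {μ : ℝ}
    (hS₀ : Convex ℝ S₀) (hS₁ : Convex ℝ S₁) (hx₀ : x ∈ S₀) (hy₀ : y ∈ S₀)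
    (hx₁ : x ∈ S₁) (hy₁ : y ∈ S₁) (hxmin : IsMinOn f₀ S₀ x) (hymin : IsMinOn f₁ S₁ y)
    (hf₀ : DifferentiableAt ℝ f₀ x) (hf₁ : DifferentiableAt ℝ f₁ y)
    (hxy : f₀ x + ⟪gradient f₀ x, y - x⟫ + μ / 2 * ‖y - x‖ ^ 2 ≤ f₀ y)
    (hyx : f₀ y + ⟪gradient f₀ y, x - y⟫ + μ / 2 * ‖x - y‖ ^ 2 ≤ f₀ x) :
    μ * ‖x - y‖ ≤ ‖gradient f₁ y - gradient f₀ y‖ := by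
  have hvx := hxmin.inner_gradient_sub_nonneg hS₀ hx₀ hy₀ hf₀.hasGradientAt
  have hvy := hymin.inner_gradient_sub_nonneg hS₁ hy₁ hx₁ hf₁.hasGradientAt
  have hsq : μ * ‖x - y‖ ^ 2 ≤ ‖gradient f₁ y - gradient f₀ y‖ * ‖x - y‖ :=
    calc μ * ‖x - y‖ ^ 2 ≤ ⟪gradient f₁ y - gradient f₀ y, x - y⟫ := by
          rw [norm_sub_rev y x] at hxy
          rw [inner_sub_left]
          linarith
      _ ≤ _ := real_inner_le_norm _ _
  rcases (norm_nonneg (x - y)).eq_or_lt with hd | hd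
  · rw [← hd, mul_zero]
    exact norm_nonneg _
  · nlinarith

theorem abs_exp_sub_one_le_mul_exp (x : ℝ) : |Real.exp x - 1| ≤ |x| * Real.exp |x| := by
  rcases le_or_gt 0 x with hx | hx
  · rw [abs_of_nonneg hx, abs_of_nonneg (by linarith [Real.one_le_exp hx])]
    have h := Real.add_one_le_exp (-x)
    rw [Real.exp_neg] at h
    have h' := mul_le_mul_of_nonneg_left h (Real.exp_pos x).le
    rw [mul_inv_cancel₀ (Real.exp_pos x).ne'] at h'
    linarith
  · rw [abs_of_nonpos (by linarith [Real.exp_le_one_iff.mpr hx.le]), abs_of_neg hx]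
    nlinarith [Real.add_one_le_exp x, Real.one_le_exp (neg_nonneg.mpr hx.le)]

theorem abs_exp_mul_sub_exp_le {u v ρ a : ℝ} (hρ : ρ ≤ 1) (ha : 0 ≤ a)
    (huv : |u - v| ≤ (1 - ρ) * a) :
    |Real.exp v * ρ - Real.exp u| ≤
      Real.exp v * ((1 - ρ) * (1 + a) * Real.exp ((1 - ρ) * a)) := by
  have hρ' : 0 ≤ 1 - ρ := by linarith
  have hE : 1 ≤ Real.exp ((1 - ρ) * a) := Real.one_le_exp (by positivity)
  have hexp : |Real.exp (u - v) - 1| ≤ (1 - ρ) * a * Real.exp ((1 - ρ) * a) :=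
    (abs_exp_sub_one_le_mul_exp _).trans <| mul_le_mul huv (Real.exp_le_exp.mpr huv)
      (Real.exp_pos _).le (by positivity)
  have hgap : |ρ - Real.exp (u - v)| ≤ (1 - ρ) * (1 + a) * Real.exp ((1 - ρ) * a) :=
    calc |ρ - Real.exp (u - v)| ≤ |ρ - 1| + |1 - Real.exp (u - v)| := abs_sub_le _ _ _
      _ = (1 - ρ) + |Real.exp (u - v) - 1| := by
          rw [abs_sub_comm ρ, abs_of_nonneg hρ', abs_sub_comm]
      _ ≤ _ := by nlinarith
  have hfac : Real.exp v * ρ - Real.exp u = Real.exp v * (ρ - Real.exp (u - v)) := by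
    rw [Real.exp_sub]; field_simp
  rw [hfac, abs_mul, abs_of_pos (Real.exp_pos v)]
  exact mul_le_mul_of_nonneg_left hgap (Real.exp_pos v).le

theorem inner_eq_sum_mul {m : ℕ} (x y : Euc m) : ⟪x, y⟫ = ∑ i, x i * y i := by
  simp [PiLp.inner_apply, mul_comm]

theorem abs_inner_le_norm_mul_sum {m : ℕ} (a b : Euc m) (hb : ∀ j, 0 ≤ b j) :
    |⟪a, b⟫| ≤ ‖a‖ * ∑ j, b j := by
  rw [inner_eq_sum_mul, Finset.mul_sum]
  refine (Finset.abs_sum_le_sum_abs _ _).trans (Finset.sum_le_sum fun j _ => ?_)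
  rw [abs_mul, abs_of_nonneg (hb j), ← Real.norm_eq_abs]
  exact mul_le_mul_of_nonneg_right (PiLp.norm_apply_le a j) (hb j)

theorem pairR_zero (ρ : ℝ) (b : Fin d₂ → ℝ) : pairR ρ b 0 = ρ := rfl

theorem pairR_succ (ρ : ℝ) (b : Fin d₂ → ℝ) (j : Fin d₂) : pairR ρ b j.succ = b j := by
  simp [pairR, vecOf]

theorem pairR_one_zero_mem_collapsedSimplex :
    pairR 1 (fun _ : Fin d₂ => 0) ∈ collapsedSimplex d₂ :=
  ⟨Fin.cases (by simp [pairR_zero]) (by simp [pairR_succ]), by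
    simp [Fin.sum_univ_succ, pairR_zero, pairR_succ]⟩

section LogLinear

variable (A₁ : Fin n → Euc d₁) (A₂ : Fin n → Euc d₂)

theorem innerA_Phi (i : Fin n) (p : Euc d₁) (r : Euc (d₂ + 1)) :
    innerA A₁ A₂ i (Phi p r) = r 0 * ⟪A₁ i, p⟫ + ∑ j, A₂ i j * r j.succ := by
  simp only [innerA, inner_eq_sum_mul, pairQ, Phi, vecOf, Fin.sum_univ_add, Finset.mul_sum]
  simp [mul_left_comm]

theorem innerA_Phi_pairR (i : Fin n) (p : Euc d₁) (ρ : ℝ) (b : Fin d₂ → ℝ) :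
    innerA A₁ A₂ i (Phi p (pairR ρ b)) = ρ * ⟪A₁ i, p⟫ + ⟪A₂ i, vecOf b⟫ := by
  simp [innerA_Phi, pairR_zero, pairR_succ, inner_eq_sum_mul, vecOf]

def gradFb (r : Euc (d₂ + 1)) (p : Euc d₁) : Euc d₁ :=
  (1 / (n : ℝ)) • ∑ i, (Real.exp (innerA A₁ A₂ i (Phi p r)) * r 0) • A₁ i

theorem hasGradientAt_Fb (c : Fin n → ℝ) (r : Euc (d₂ + 1)) (p : Euc d₁) :
    HasGradientAt (Fb c A₁ A₂ r) (gradFb A₁ A₂ r p) p := by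
  have hFb : Fb c A₁ A₂ r = fun q => (1 / (n : ℝ)) *
      ∑ i, (c i + Real.exp (r 0 * ⟪A₁ i, q⟫ + ∑ j, A₂ i j * r j.succ)) := by
    funext q
    simp only [Fb, Ffull, innerA_Phi]
  have hterm (i : Fin n) : HasFDerivAt
      (fun q => c i + Real.exp (r 0 * ⟪A₁ i, q⟫ + ∑ j, A₂ i j * r j.succ))
      (Real.exp (innerA A₁ A₂ i (Phi p r)) • r 0 • innerSL ℝ (A₁ i)) p := by
    rw [innerA_Phi]
    exact ((((innerSL ℝ (A₁ i)).hasFDerivAt).const_mul (r 0)).add_const _).exp.const_add _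
  rw [hasGradientAt_iff_hasFDerivAt, hFb]
  refine ((HasFDerivAt.fun_sum fun i _ => hterm i).const_mul _).congr_fderiv ?_
  ext v
  simp [gradFb, mul_assoc]

theorem le_kappa (i : Fin n) : (1 + ‖A₁ i‖ + ‖A₂ i‖) * ‖A₁ i‖ ≤ kappa A₁ A₂ := by
  calc (1 + ‖A₁ i‖ + ‖A₂ i‖) * ‖A₁ i‖
      = ‖vecOf (fun i => (1 + ‖A₁ i‖ + ‖A₂ i‖) * ‖A₁ i‖) i‖ :=
        (Real.norm_of_nonneg (by positivity)).symm
    _ ≤ kappa A₁ A₂ := PiLp.norm_apply_le _ i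

theorem norm_gradFb_sub_le {ρ : ℝ} {p : Euc d₁} (hp : p ∈ probSimplex d₁) {b : Fin d₂ → ℝ}
    (hb : ∀ j, 0 ≤ b j) (hbsum : ∑ j, b j = 1 - ρ) :
    ‖gradFb A₁ A₂ (pairR ρ b) p - gradFb A₁ A₂ (pairR 1 fun _ => 0) p‖ ≤
      Fbar A₁ A₂ (Phi p (pairR ρ b)) *
        ((1 - ρ) * Real.exp ((⨆ i, (‖A₁ i‖ + ‖A₂ i‖)) * (1 - ρ)) * kappa A₁ A₂) := by
  set K := (1 - ρ) * Real.exp ((⨆ i, (‖A₁ i‖ + ‖A₂ i‖)) * (1 - ρ)) * kappa A₁ A₂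
  set u := fun i => innerA A₁ A₂ i (Phi p (pairR 1 fun _ => 0))
  set v := fun i => innerA A₁ A₂ i (Phi p (pairR ρ b))
  have hρ : 0 ≤ 1 - ρ := hbsum ▸ Finset.sum_nonneg fun j _ => hb j
  have huv (i : Fin n) : |u i - v i| ≤ (1 - ρ) * (‖A₁ i‖ + ‖A₂ i‖) := by
    have h₁ := abs_inner_le_norm_mul_sum (A₁ i) p hp.1
    have h₂ := abs_inner_le_norm_mul_sum (A₂ i) (vecOf b) hb
    rw [hp.2, mul_one] at h₁
    rw [show ∑ j, vecOf b j = 1 - ρ from hbsum] at h₂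
    simp only [u, v, innerA_Phi_pairR]
    have hvec : vecOf (fun _ : Fin d₂ => (0 : ℝ)) = 0 := rfl
    rw [hvec, inner_zero_right]
    calc |1 * ⟪A₁ i, p⟫ + 0 - (ρ * ⟪A₁ i, p⟫ + ⟪A₂ i, vecOf b⟫)|
        = |(1 - ρ) * ⟪A₁ i, p⟫ - ⟪A₂ i, vecOf b⟫| := by ring_nf
      _ ≤ (1 - ρ) * |⟪A₁ i, p⟫| + |⟪A₂ i, vecOf b⟫| := by
          rw [← abs_of_nonneg hρ, ← abs_mul, abs_of_nonneg hρ]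
          exact abs_sub _ _
      _ ≤ (1 - ρ) * (‖A₁ i‖ + ‖A₂ i‖) := by nlinarith
  have hterm (i : Fin n) :
      ‖(Real.exp (v i) * ρ - Real.exp (u i)) • A₁ i‖ ≤ Real.exp (v i) * K := by
    have hle : ‖A₁ i‖ + ‖A₂ i‖ ≤ ⨆ i, (‖A₁ i‖ + ‖A₂ i‖) :=
      le_ciSup (f := fun i => ‖A₁ i‖ + ‖A₂ i‖) (Set.finite_range _).bddAbove i
    rw [norm_smul, Real.norm_eq_abs]
    calc |Real.exp (v i) * ρ - Real.exp (u i)| * ‖A₁ i‖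
        ≤ Real.exp (v i) * ((1 - ρ) * (1 + (‖A₁ i‖ + ‖A₂ i‖)) *
            Real.exp ((1 - ρ) * (‖A₁ i‖ + ‖A₂ i‖))) * ‖A₁ i‖ :=
          mul_le_mul_of_nonneg_right (abs_exp_mul_sub_exp_le (by linarith) (by positivity)
            (huv i)) (norm_nonneg _)
      _ = Real.exp (v i) * (1 - ρ) * Real.exp ((1 - ρ) * (‖A₁ i‖ + ‖A₂ i‖)) *
            ((1 + ‖A₁ i‖ + ‖A₂ i‖) * ‖A₁ i‖) := by ring
      _ ≤ Real.exp (v i) * (1 - ρ) * Real.exp ((⨆ i, (‖A₁ i‖ + ‖A₂ i‖)) * (1 - ρ)) *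
            kappa A₁ A₂ := by
          gcongr Real.exp (v i) * (1 - ρ) * Real.exp ?_ * ?_
          · rw [mul_comm]; exact mul_le_mul_of_nonneg_right hle hρ
          · exact le_kappa A₁ A₂ i
      _ = Real.exp (v i) * K := by ring
  have hdiff : gradFb A₁ A₂ (pairR ρ b) p - gradFb A₁ A₂ (pairR 1 fun _ => 0) p =
      (1 / (n : ℝ)) • ∑ i, (Real.exp (v i) * ρ - Real.exp (u i)) • A₁ i := by
    simp only [gradFb, pairR_zero, mul_one, ← smul_sub, ← Finset.sum_sub_distrib, sub_smul]
    rfl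
  rw [hdiff, norm_smul, Real.norm_of_nonneg (by positivity), Fbar, mul_assoc, Finset.sum_mul]
  gcongr
  exact (norm_sum_le _ _).trans (Finset.sum_le_sum fun i _ => hterm i)

end LogLinear

theorem theorem2_reuse_gap_add_general
    {n d₁ d₂ : ℕ}
    (c : Fin n → ℝ)
    (A₁ : Fin n → Euc d₁) (A₂ : Fin n → Euc d₂)
    {μ₁ : ℝ} (hμ₁ : 0 < μ₁)
    {ρstar : ℝ} {p₂star : Fin d₂ → ℝ}
    (hrstarΔ : pairR ρstar (fun j => (1 - ρstar) * p₂star j) ∈ collapsedSimplex d₂)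
    {S₀ Sstar : Set (Euc d₁)}
    (hS₀conv : Convex ℝ S₀) (hS₀sub : S₀ ⊆ probSimplex d₁)
    (hSstarconv : Convex ℝ Sstar) (hSstarsub : Sstar ⊆ probSimplex d₁)
    {ptil p₁' : Euc d₁}
    (hptil : ptil ∈ S₀)
    (hptilmin : IsMinOn (fun p => Fb c A₁ A₂ (pairR 1 (fun _ => 0)) p) S₀ ptil)
    (hp₁' : p₁' ∈ Sstar)
    (hp₁'min : IsMinOn
      (fun p => Fb c A₁ A₂ (pairR ρstar (fun j => (1 - ρstar) * p₂star j)) p) Sstar p₁')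
    (hsc : ∀ r ∈ collapsedSimplex d₂, ∀ x ∈ probSimplex d₁, ∀ y ∈ probSimplex d₁,
      Fb c A₁ A₂ r x + ⟪gradient (fun p => Fb c A₁ A₂ r p) x, y - x⟫ +
        μ₁ / 2 * ‖y - x‖ ^ 2 ≤ Fb c A₁ A₂ r y)
    (hmf₁ : ptil ∈ Sstar) (hmf₂ : p₁' ∈ S₀) :
    ‖ptil - p₁'‖ ≤
      (2 * Fbar A₁ A₂ (Phi p₁' (pairR ρstar (fun j => (1 - ρstar) * p₂star j))) *
          Real.exp ((⨆ i, (‖A₁ i‖ + ‖A₂ i‖)) * (1 - ρstar)) / μ₁) *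
        kappa A₁ A₂ * (1 - ρstar) := by
  set rstar := pairR ρstar fun j => (1 - ρstar) * p₂star j
  set r₀ : Euc (d₂ + 1) := pairR 1 fun _ => 0
  have hb (j : Fin d₂) : 0 ≤ (1 - ρstar) * p₂star j := by
    simpa only [rstar, pairR_succ] using hrstarΔ.1 j.succ
  have hbsum : ∑ j, (1 - ρstar) * p₂star j = 1 - ρstar := by
    have h := hrstarΔ.2
    simp only [rstar, Fin.sum_univ_succ, pairR_zero, pairR_succ] at h
    linarith
  have hr₀ : r₀ ∈ collapsedSimplex d₂ := pairR_one_zero_mem_collapsedSimplex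
  have hptilΔ := hS₀sub hptil
  have hp₁'Δ := hSstarsub hp₁'
  have hstab : μ₁ * ‖ptil - p₁'‖ ≤ ‖gradFb A₁ A₂ rstar p₁' - gradFb A₁ A₂ r₀ p₁'‖ := by
    have h := mul_norm_sub_le_of_isMinOn hS₀conv hSstarconv hptil hmf₂ hmf₁ hp₁' hptilmin
      hp₁'min (hasGradientAt_Fb A₁ A₂ c r₀ ptil).differentiableAt
      (hasGradientAt_Fb A₁ A₂ c rstar p₁').differentiableAt
      (hsc r₀ hr₀ ptil hptilΔ p₁' hp₁'Δ) (hsc r₀ hr₀ p₁' hp₁'Δ ptil hptilΔ)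
    rwa [(hasGradientAt_Fb A₁ A₂ c rstar p₁').gradient,
      (hasGradientAt_Fb A₁ A₂ c r₀ p₁').gradient] at h
  have hgap := norm_gradFb_sub_le A₁ A₂ hp₁'Δ hb hbsum
  set B := Fbar A₁ A₂ (Phi p₁' rstar) *
    ((1 - ρstar) * Real.exp ((⨆ i, (‖A₁ i‖ + ‖A₂ i‖)) * (1 - ρstar)) * kappa A₁ A₂)
  have hB : 0 ≤ B := (norm_nonneg _).trans hgap
  calc ‖ptil - p₁'‖ ≤ B / μ₁ := by rw [le_div_iff₀' hμ₁]; exact hstab.trans hgap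
    _ ≤ 2 * B / μ₁ := by gcongr; linarith
    _ = _ := by ring

/-- **Theorem 2 (reuse gap after adding domains, formal version).**
Let `r₀ = (1, 0, …, 0) ∈ Δ^{d₂}` and `r* = (ρ*, (1−ρ*)·p₂*) ∈ Δ^{d₂}` with `ρ* ∈ [0,1]`.
Let `p̃` minimize `p₁ ↦ F(r₀, p₁)` over a convex `S(r₀) ⊆ Δ^{d₁−1}` and `p₁'` minimize
`p₁ ↦ F(r*, p₁)` over a convex `S(r*) ⊆ Δ^{d₁−1}`.  Assume `μ₁`-strong convexity of
`p₁ ↦ F(r, p₁)` on `Δ^{d₁−1}` for each `r ∈ Δ^{d₂}`, mutual feasibility, and that `r*`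
together with `p₁'` solves the post-update mixing problem with expanded optimum
`q* = Φ_{p₁'}(r*)`.  Then with `c_max = max_i (‖A_{i,1}‖ + ‖A_{i,2}‖)`,
`‖p̃ − p₁'‖ ≤ (2·F̄(q*)·exp(c_max·(1−ρ*)) / μ₁) · κ(α_fix, α_comp) · (1−ρ*)`. -/
theorem theorem2_reuse_gap_add
    {n d₁ d₂ : ℕ} (hn : 0 < n) (hd₁ : 0 < d₁)
    (c : Fin n → ℝ) (hc : ∀ i, 0 < c i)
    (A₁ : Fin n → Euc d₁) (A₂ : Fin n → Euc d₂)
    (N' : Fin (d₁ + d₂) → ℝ) (hN : ∀ j, 0 < N' j)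
    {k R : ℝ} (hk : 0 < k) (hR : 0 < R)
    {μ₁ : ℝ} (hμ₁ : 0 < μ₁)
    {ρstar : ℝ} (hρ : ρstar ∈ Set.Icc (0 : ℝ) 1) {p₂star : Fin d₂ → ℝ}
    (hrstarΔ : pairR ρstar (fun j => (1 - ρstar) * p₂star j) ∈ collapsedSimplex d₂)
    {S₀ Sstar : Set (Euc d₁)}
    (hS₀conv : Convex ℝ S₀) (hS₀sub : S₀ ⊆ probSimplex d₁)
    (hSstarconv : Convex ℝ Sstar) (hSstarsub : Sstar ⊆ probSimplex d₁)
    {ptil p₁' : Euc d₁}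
    (hptil : ptil ∈ S₀)
    (hptilmin : IsMinOn (fun p => Fb c A₁ A₂ (pairR 1 (fun _ => 0)) p) S₀ ptil)
    (hp₁' : p₁' ∈ Sstar)
    (hp₁'min : IsMinOn
      (fun p => Fb c A₁ A₂ (pairR ρstar (fun j => (1 - ρstar) * p₂star j)) p) Sstar p₁')
    (hsc : ∀ r ∈ collapsedSimplex d₂, ∀ x ∈ probSimplex d₁, ∀ y ∈ probSimplex d₁,
      Fb c A₁ A₂ r x + ⟪gradient (fun p => Fb c A₁ A₂ r p) x, y - x⟫ +
        μ₁ / 2 * ‖y - x‖ ^ 2 ≤ Fb c A₁ A₂ r y)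
    (hmf₁ : ptil ∈ Sstar) (hmf₂ : p₁' ∈ S₀)
    (hq : Phi p₁' (pairR ρstar (fun j => (1 - ρstar) * p₂star j)) ∈ feasQ d₁ d₂ N' k R)
    (hqmin : IsMinOn (Ffull c A₁ A₂) (feasQ d₁ d₂ N' k R)
      (Phi p₁' (pairR ρstar (fun j => (1 - ρstar) * p₂star j)))) :
    ‖ptil - p₁'‖ ≤
      (2 * Fbar A₁ A₂ (Phi p₁' (pairR ρstar (fun j => (1 - ρstar) * p₂star j))) *
          Real.exp ((⨆ i, (‖A₁ i‖ + ‖A₂ i‖)) * (1 - ρstar)) / μ₁) *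
        kappa A₁ A₂ * (1 - ρstar) :=
  theorem2_reuse_gap_add_general c A₁ A₂ hμ₁ hrstarΔ hS₀conv hS₀sub hSstarconv hSstarsub hptil
    hptilmin hp₁' hp₁'min hsc hmf₁ hmf₂
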